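/- There exists a constant C > 0 such that for every horizon T ≥ 4 there is a deterministic one-bit-feedback context-free algorithm (which may depend on T) posting price pairs p_t ≤ q_t such that for all s, b with 0 ≤ s ≤ b ≤ 1, the profit regret satisfies ∑_{t=1}^T (b − s) − ∑_{t=1}^T (q_t − p_t)·1{s ≤ p_t and q_t ≤ b} ≤ C · (1 + log(log T)). (The dyadic search followed by recursive quadratic search achieves this.) -/

import Mathlib

open Finset

noncomputable section

abbrev AlgoCF2 := List (ℝ × ℝ × Bool) → ℝ × ℝ

def histCF2 (Alg : AlgoCF2) (s b : ℝ) : ℕ → List (ℝ × ℝ × Bool)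
  | 0 => []
  | t + 1 =>
    let h := histCF2 Alg s b t
    let pq := Alg h
    h ++ [(pq.1, pq.2, decide (s ≤ pq.1 ∧ pq.2 ≤ b))]

def priceCF2 (Alg : AlgoCF2) (s b : ℝ) (t : ℕ) : ℝ × ℝ :=
  Alg (histCF2 Alg s b t)

/-!
The algorithm tests the points of finer and finer dyadic grids, posting `p = q = a / 2^(k+1)`.
While the grid of mesh `2^-k` misses `[s, b]`, the gap `b - s` is at most `2^-k` and fewer than
`2^(k+2)` rounds have been spent, so the dyadic phase costs `O(1)`; the first trade, at `m`,
gives `s ∈ [m - δ, m]` and `b ∈ [m, m + δ]` with `δ = 2^-k`.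

These brackets are then shrunk in stages (recursive quadratic search). In stage `j` the seller
price walks down its bracket in steps of `δ / 2^(2^j)`, the buyer price sitting at the bottom of
the buyer bracket, until a trade fails or the bracket is shorter than a step; then the buyer price
walks up in the same way. A bracket enters stage `j` with length about `√(δ · δ / 2^(2^j))`,
so every stage costs `O(δ)`, and after `log₂ log₂ T + 1` stages the step is below `1 / T`; from
then on, posting the inner ends of the brackets loses at most `2 / T` per round. A potential
function does the accounting round by round.
-/

namespace BilateralTrade

open Set Real

def profit (s b : ℝ) (pq : ℝ × ℝ) : ℝ :=
  if s ≤ pq.1 ∧ pq.2 ≤ b then pq.2 - pq.1 else 0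

def regret (s b : ℝ) (pq : ℝ × ℝ) : ℝ := (b - s) - profit s b pq

section Regret

variable {s b : ℝ} {pq : ℝ × ℝ}

lemma regret_of_trade (h : s ≤ pq.1 ∧ pq.2 ≤ b) :
    regret s b pq = (pq.1 - s) + (b - pq.2) := by
  rw [regret, profit, if_pos h]
  ring

lemma regret_of_not_trade (h : ¬(s ≤ pq.1 ∧ pq.2 ≤ b)) : regret s b pq = b - s := by
  rw [regret, profit, if_neg h, sub_zero]

lemma regret_le_sub (h : pq.1 ≤ pq.2) : regret s b pq ≤ b - s := by
  unfold regret profit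
  split_ifs <;> linarith

end Regret

structure PriceMachine (σ : Type*) where
  init : σ
  step : σ → Bool → σ
  post : σ → ℝ × ℝ

namespace PriceMachine

variable {σ : Type*} (M : PriceMachine σ) (s b : ℝ)

def toAlgo : AlgoCF2 := fun h => M.post (h.foldl (fun x r => M.step x r.2.2) M.init)

def next (x : σ) : σ := M.step x (decide (s ≤ (M.post x).1 ∧ (M.post x).2 ≤ b))

def run : ℕ → σ
  | 0 => M.init
  | t + 1 => M.next s b (run t)

lemma foldl_histCF2 (t : ℕ) :
    (histCF2 M.toAlgo s b t).foldl (fun x r => M.step x r.2.2) M.init = M.run s b t := by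
  induction t with
  | zero => rfl
  | succ t ih =>
    rw [histCF2, List.foldl_append, ih]
    simp only [toAlgo, ih]
    rfl

lemma priceCF2_toAlgo (t : ℕ) : priceCF2 M.toAlgo s b t = M.post (M.run s b t) :=
  congrArg M.post (M.foldl_histCF2 s b t)

variable {M s b}

theorem sum_regret_le {I : σ → Prop} {Φ : σ → ℝ} {ε : ℝ} (hinit : I M.init)
    (hstep : ∀ x, I x →
      I (M.next s b x) ∧ regret s b (M.post x) ≤ Φ x - Φ (M.next s b x) + ε)
    (hΦ : ∀ x, I x → 0 ≤ Φ x) (n : ℕ) :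
    ∑ t ∈ range n, regret s b (M.post (M.run s b t)) ≤ Φ M.init + n * ε := by
  have hinv : ∀ t, I (M.run s b t) := by
    intro t
    induction t with
    | zero => exact hinit
    | succ t ih => exact (hstep _ ih).1
  calc ∑ t ∈ range n, regret s b (M.post (M.run s b t))
      ≤ ∑ t ∈ range n, (Φ (M.run s b t) - Φ (M.run s b (t + 1)) + ε) :=
        sum_le_sum fun t _ => (hstep _ (hinv t)).2
    _ = Φ M.init - Φ (M.run s b n) + n * ε := by
        rw [sum_add_distrib, sum_range_sub', sum_const, card_range, nsmul_eq_mul]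
        rfl
    _ ≤ Φ M.init + n * ε := by linarith [hΦ _ (hinv n)]

end PriceMachine

def MissesDyadics (k n : ℕ) (s b : ℝ) : Prop :=
  ∀ i : ℕ, 0 < i → i < n → (i : ℝ) / 2 ^ k ∉ Icc s b

namespace MissesDyadics

variable {k n : ℕ} {s b : ℝ}

lemma succ (h : MissesDyadics k n s b) (hn : (n : ℝ) / 2 ^ k ∉ Icc s b) :
    MissesDyadics k (n + 1) s b := by
  intro i hi0 hi
  rcases Nat.lt_succ_iff_lt_or_eq.mp hi with hi | rfl
  · exact h i hi0 hi
  · exact hn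

lemma exists_cell (hs : 0 ≤ s) (hb : b ≤ 1) (h : MissesDyadics k (2 ^ k) s b) :
    ∃ i : ℕ, (i : ℝ) / 2 ^ k ≤ s ∧ b ≤ (i + 1) / 2 ^ k := by
  have hpow : (0 : ℝ) < 2 ^ k := by positivity
  refine ⟨⌊s * 2 ^ k⌋₊, (div_le_iff₀ hpow).mpr (Nat.floor_le (by positivity)), ?_⟩
  by_contra! hlt
  have hs' : s < (⌊s * 2 ^ k⌋₊ + 1 : ℝ) / 2 ^ k :=
    (lt_div_iff₀ hpow).mpr (Nat.lt_floor_add_one _)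
  have hlt1 : ((⌊s * 2 ^ k⌋₊ + 1 : ℕ) : ℝ) < 2 ^ k := by
    push_cast
    exact (div_lt_one hpow).mp (hlt.trans_le hb)
  exact h _ (Nat.succ_pos _) (by exact_mod_cast hlt1) (by push_cast; exact ⟨hs'.le, hlt.le⟩)

lemma brackets_of_mem (hs : 0 ≤ s) (hb : b ≤ 1) (h : MissesDyadics k (2 ^ k) s b) {m : ℝ}
    (hm : m ∈ Icc s b) : m - 1 / 2 ^ k ≤ s ∧ b ≤ m + 1 / 2 ^ k := by
  obtain ⟨i, hi, hi'⟩ := h.exists_cell hs hb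
  have hcell : (i + 1 : ℝ) / 2 ^ k = i / 2 ^ k + 1 / 2 ^ k := by ring
  constructor <;> linarith [hm.1, hm.2]

end MissesDyadics

def width (j : ℕ) (δ : ℝ) : ℝ := δ / 2 ^ 2 ^ j

def slack : ℕ → ℝ → ℝ
  | 0, δ => δ
  | j + 1, δ => width j δ

/-- A step of stage `j` costs at most `2 * slack j δ` and shortens a bracket by `width j δ`.
Since `slack j δ ^ 2 ≤ 2 * δ * width j δ`, a whole stage costs `O(δ)`
(`rate_mul_slack_le`). -/
def rate (j : ℕ) (δ : ℝ) : ℝ := 2 * slack j δ / width j δ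

section Scales

variable {j : ℕ} {δ : ℝ}

lemma width_pos (hδ : 0 < δ) : 0 < width j δ := by unfold width; positivity

lemma width_le_slack (hδ : 0 ≤ δ) : width j δ ≤ slack j δ := by
  cases j with
  | zero => simp only [width, slack]; linarith
  | succ j =>
    exact div_le_div_of_nonneg_left hδ (by positivity)
      (pow_le_pow_right₀ one_le_two (Nat.pow_le_pow_right two_pos j.le_succ))

lemma sq_slack_le : slack j δ ^ 2 ≤ 2 * δ * width j δ := by
  cases j with
  | zero => simp only [slack, width]; norm_num; nlinarith
  | succ j =>
    have h : slack (j + 1) δ ^ 2 = δ * width (j + 1) δ := by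
      simp only [slack, width, pow_succ, pow_mul]
      ring
    have h0 : 0 ≤ δ * width (j + 1) δ := h ▸ sq_nonneg _
    linarith

lemma rate_nonneg (hδ : 0 < δ) : 0 ≤ rate j δ := by
  have hw := width_pos (j := j) hδ
  exact div_nonneg (by linarith [width_le_slack (j := j) hδ.le]) hw.le

lemma rate_mul_width (hδ : 0 < δ) : rate j δ * width j δ = 2 * slack j δ :=
  div_mul_cancel₀ _ (width_pos hδ).ne'

lemma rate_mul_slack_le (hδ : 0 < δ) : rate j δ * slack j δ ≤ 4 * δ := by
  have hw := width_pos (j := j) hδ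
  rw [rate, div_mul_eq_mul_div, div_le_iff₀ hw]
  nlinarith [sq_slack_le (j := j) (δ := δ)]

end Scales

def stages (T : ℕ) : ℕ := Nat.log 2 (Nat.log 2 T) + 1

lemma add_one_le_stages {T j : ℕ} {δ : ℝ} (hT : 0 < T) (hδ : δ ≤ 1)
    (h : ¬width j δ ≤ 1 / T) : j + 1 ≤ stages T := by
  have hT' : (0 : ℝ) < T := by exact_mod_cast hT
  have hpow : ((2 ^ 2 ^ j : ℕ) : ℝ) < T := by
    rw [not_le, width, div_lt_div_iff₀ hT' (by positivity)] at h
    push_cast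
    nlinarith
  have h2j : 2 ^ j ≤ Nat.log 2 T := Nat.le_log_of_pow_le one_lt_two (by exact_mod_cast hpow.le)
  have hj : j ≤ Nat.log 2 (Nat.log 2 T) := Nat.le_log_of_pow_le one_lt_two h2j
  unfold stages
  omega

/-- `dyadic k a` posts `a / 2^(k+1)`, the grid of mesh `2^-k` having missed `[s, b]`. In
`seller` and `buyer` (named after the side whose price moves) `j` is the stage, `δ` the scale
found by the dyadic search, and the brackets are `s ∈ [slo, shi]`, `b ∈ [blo, bhi]`. -/
inductive State
  | dyadic (k a : ℕ)
  | seller (j : ℕ) (δ slo shi blo bhi : ℝ)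
  | buyer (j : ℕ) (δ slo shi blo bhi : ℝ)
  | exploit (p q : ℝ)

def quote : State → ℝ × ℝ
  | .dyadic k a => (a / 2 ^ (k + 1), a / 2 ^ (k + 1))
  | .seller j δ slo shi blo _ => (max slo (shi - width j δ), blo)
  | .buyer j δ _ shi blo bhi => (shi, min bhi (blo + width j δ))
  | .exploit p q => (p, q)

def endStage (T j : ℕ) (δ slo shi blo bhi : ℝ) : State :=
  if width j δ ≤ 1 / T then .exploit shi blo else .seller (j + 1) δ slo shi blo bhi

def step (T : ℕ) : State → Bool → State
  | .dyadic k a, true =>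
    let m : ℝ := a / 2 ^ (k + 1)
    .seller 0 (1 / 2 ^ k) (m - 1 / 2 ^ k) m m (m + 1 / 2 ^ k)
  | .dyadic k a, false => if a + 1 < 2 ^ (k + 1) then .dyadic k (a + 1) else .dyadic (k + 1) 1
  | .seller j δ slo shi blo bhi, true =>
    let p := max slo (shi - width j δ)
    if p - slo ≤ width j δ then .buyer j δ slo p blo bhi else .seller j δ slo p blo bhi
  | .seller j δ slo shi blo bhi, false => .buyer j δ (max slo (shi - width j δ)) shi blo bhi
  | .buyer j δ slo shi blo bhi, true =>
    let q := min bhi (blo + width j δ)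
    if bhi - q ≤ width j δ then endStage T j δ slo shi q bhi else .buyer j δ slo shi q bhi
  | .buyer j δ slo shi blo bhi, false => endStage T j δ slo shi blo (min bhi (blo + width j δ))
  | .exploit p q, _ => .exploit p q

/-- The clamp makes the prices ordered on every history; along the run it never acts
(`machine_post`). -/
def machine (T : ℕ) : PriceMachine State where
  init := .dyadic 0 1
  step := step T
  post σ := (min (quote σ).1 (quote σ).2, (quote σ).2)

structure Bracket (T : ℕ) (s b : ℝ) (j : ℕ) (δ slo shi blo bhi : ℝ) : Prop where
  delta_pos : 0 < δ
  delta_le_one : δ ≤ 1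
  stage_le : j ≤ stages T
  slo_le : slo ≤ s
  le_shi : s ≤ shi
  shi_le_blo : shi ≤ blo
  blo_le : blo ≤ b
  le_bhi : b ≤ bhi
  spread_le : bhi - slo ≤ 2 * δ
  buyer_spread_le : bhi - blo ≤ slack j δ

def Invariant (T : ℕ) (s b : ℝ) : State → Prop
  | .dyadic k a => MissesDyadics k (2 ^ k) s b ∧ MissesDyadics (k + 1) a s b ∧ a < 2 ^ (k + 1)
  | .seller j δ slo shi blo bhi => Bracket T s b j δ slo shi blo bhi ∧ shi - slo ≤ slack j δ
  | .buyer j δ slo shi blo bhi => Bracket T s b j δ slo shi blo bhi ∧ shi - slo ≤ width j δ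
  | .exploit p q => s ≤ p ∧ p ≤ q ∧ q ≤ b ∧ (p - s) + (b - q) ≤ 2 / T

def buyerPotential (T j : ℕ) (δ blo bhi : ℝ) : ℝ :=
  rate j δ * (bhi - blo) + 2 * δ + 12 * δ * (stages T - j)

/-- The `2 * δ` terms pay for the round ending a turn, which costs at most `b - s ≤ 2 * δ`, and
`12 * δ` pays for each stage still to come. In the dyadic phase `2^(k+1) + a` bounds the number
of rounds spent. -/
def potential (T : ℕ) (s b : ℝ) : State → ℝ
  | .dyadic k a => 12 * (stages T + 1) + 5 - (2 ^ (k + 1) + a) * (b - s)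
  | .seller j δ slo shi blo bhi => rate j δ * (shi - slo) + 2 * δ + buyerPotential T j δ blo bhi
  | .buyer j δ _ _ blo bhi => buyerPotential T j δ blo bhi
  | .exploit _ _ => 0

def Improves (T : ℕ) (s b : ℝ) (σ σ' : State) : Prop :=
  Invariant T s b σ' ∧ regret s b (quote σ) ≤ potential T s b σ - potential T s b σ' + 2 / T

section Analysis

variable {T j k a : ℕ} {s b δ slo shi blo bhi p q : ℝ}

lemma Bracket.sub_le (h : Bracket T s b j δ slo shi blo bhi) : b - s ≤ 2 * δ := by
  linarith [h.slo_le, h.le_bhi, h.spread_le]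

lemma quote_le {σ : State} (h : Invariant T s b σ) : (quote σ).1 ≤ (quote σ).2 := by
  cases σ with
  | dyadic k a => exact le_rfl
  | seller j δ slo shi blo bhi =>
    have hw := width_pos (j := j) h.1.delta_pos
    show max slo (shi - width j δ) ≤ blo
    exact max_le (by linarith [h.1.slo_le, h.1.le_shi, h.1.shi_le_blo])
      (by linarith [h.1.shi_le_blo])
  | buyer j δ slo shi blo bhi =>
    have hw := width_pos (j := j) h.1.delta_pos
    show shi ≤ min bhi (blo + width j δ)
    exact le_min (by linarith [h.1.shi_le_blo, h.1.blo_le, h.1.le_bhi])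
      (by linarith [h.1.shi_le_blo])
  | exploit p q => exact h.2.1

lemma potential_seller_le (h : Invariant T s b (.seller j δ slo shi blo bhi)) :
    potential T s b (.seller j δ slo shi blo bhi) ≤ 12 * δ * (stages T - j + 1) := by
  obtain ⟨hB, hslo⟩ := h
  have hr := rate_nonneg (j := j) hB.delta_pos
  have h1 := mul_le_mul_of_nonneg_left hslo hr
  have h2 := mul_le_mul_of_nonneg_left hB.buyer_spread_le hr
  have h3 := rate_mul_slack_le (j := j) hB.delta_pos
  simp only [potential, buyerPotential]
  linarith

lemma dyadic_count_mul_sub_le (hs : 0 ≤ s) (hsb : s ≤ b) (hb : b ≤ 1)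
    (h : Invariant T s b (.dyadic k a)) : (2 ^ (k + 1) + a + 1) * (b - s) ≤ 4 := by
  obtain ⟨hk, -, ha⟩ := h
  have hgap := (hk.brackets_of_mem hs hb ⟨le_rfl, hsb⟩).2
  have ha' : (a : ℝ) + 1 ≤ 2 ^ (k + 1) := by exact_mod_cast ha
  calc (2 ^ (k + 1) + a + 1) * (b - s) ≤ (2 * 2 ^ (k + 1)) * (1 / 2 ^ k) := by
        gcongr
        · linarith
        · linarith
    _ = 4 := by rw [pow_succ]; field_simp; ring

lemma Bracket.buyerPotential_ge (h : Bracket T s b j δ slo shi blo bhi) :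
    2 * δ + 12 * δ * (stages T - j) ≤ buyerPotential T j δ blo bhi := by
  have := mul_nonneg (rate_nonneg (j := j) h.delta_pos)
    (sub_nonneg.mpr (h.blo_le.trans h.le_bhi))
  unfold buyerPotential
  linarith

lemma Bracket.two_mul_le_buyerPotential (h : Bracket T s b j δ slo shi blo bhi) :
    2 * δ ≤ buyerPotential T j δ blo bhi := by
  have hj : (j : ℝ) ≤ stages T := by exact_mod_cast h.stage_le
  have := mul_nonneg h.delta_pos.le (sub_nonneg.mpr hj)
  linarith [h.buyerPotential_ge]

lemma potential_nonneg (hs : 0 ≤ s) (hsb : s ≤ b) (hb : b ≤ 1) {σ : State}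
    (h : Invariant T s b σ) : 0 ≤ potential T s b σ := by
  cases σ with
  | dyadic k a =>
    have := dyadic_count_mul_sub_le hs hsb hb h
    simp only [potential]
    nlinarith
  | seller j δ slo shi blo bhi =>
    obtain ⟨hB, -⟩ := h
    have := mul_nonneg (rate_nonneg (j := j) hB.delta_pos)
      (sub_nonneg.mpr (hB.slo_le.trans hB.le_shi))
    simp only [potential]
    linarith [hB.delta_pos, hB.two_mul_le_buyerPotential]
  | buyer j δ slo shi blo bhi =>
    exact (mul_nonneg zero_le_two h.1.delta_pos.le).trans h.1.two_mul_le_buyerPotential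
  | exploit p q => exact le_rfl

lemma improves_dyadic_hit (hs : 0 ≤ s) (hb : b ≤ 1) (h : Invariant T s b (.dyadic k a))
    (hm : (a : ℝ) / 2 ^ (k + 1) ∈ Icc s b) :
    Improves T s b (.dyadic k a) (step T (.dyadic k a) true) := by
  set m : ℝ := a / 2 ^ (k + 1)
  show Improves T s b _ (.seller 0 (1 / 2 ^ k) (m - 1 / 2 ^ k) m m (m + 1 / 2 ^ k))
  obtain ⟨hlo, hhi⟩ := h.1.brackets_of_mem hs hb hm
  have hδ : (0 : ℝ) < 1 / 2 ^ k := by positivity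
  have hδ1 : (1 : ℝ) / 2 ^ k ≤ 1 := (div_le_one (by positivity)).mpr (one_le_pow₀ one_le_two)
  have hinv : Invariant T s b (.seller 0 (1 / 2 ^ k) (m - 1 / 2 ^ k) m m (m + 1 / 2 ^ k)) :=
    ⟨⟨hδ, hδ1, Nat.zero_le _, hlo, hm.1, le_rfl, hm.2, hhi, by linarith, by simp [slack]⟩,
      by simp [slack]⟩
  refine ⟨hinv, ?_⟩
  have hΦ : potential T s b (.seller 0 (1 / 2 ^ k) (m - 1 / 2 ^ k) m m (m + 1 / 2 ^ k)) ≤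
      12 * (stages T + 1) := by
    refine (potential_seller_le hinv).trans ?_
    rw [Nat.cast_zero, sub_zero, mul_assoc]
    gcongr
    exact mul_le_of_le_one_left (by positivity) hδ1
  have hreg : regret s b (quote (.dyadic k a)) ≤ b - s := regret_le_sub le_rfl
  have hcount := dyadic_count_mul_sub_le hs (hm.1.trans hm.2) hb h
  have h2T : (0 : ℝ) ≤ 2 / T := by positivity
  change _ ≤ 12 * (stages T + 1) + 5 - (2 ^ (k + 1) + a) * (b - s) - _ + _
  linarith

lemma improves_dyadic_miss (hsb : s ≤ b) (h : Invariant T s b (.dyadic k a))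
    (hm : (a : ℝ) / 2 ^ (k + 1) ∉ Icc s b) :
    Improves T s b (.dyadic k a) (step T (.dyadic k a) false) := by
  obtain ⟨hk, ha, hlt⟩ := h
  have hreg : regret s b (quote (.dyadic k a)) = b - s := regret_of_not_trade hm
  have h2T : (0 : ℝ) ≤ 2 / T := by positivity
  by_cases hnext : a + 1 < 2 ^ (k + 1)
  · have hstep : step T (.dyadic k a) false = .dyadic k (a + 1) := if_pos hnext
    rw [hstep]
    refine ⟨⟨hk, ha.succ hm, hnext⟩, ?_⟩
    simp only [potential]
    push_cast
    linarith
  · have hstep : step T (.dyadic k a) false = .dyadic (k + 1) 1 := if_neg hnext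
    have ha1 : a + 1 = 2 ^ (k + 1) := by omega
    rw [hstep]
    refine ⟨⟨ha1 ▸ ha.succ hm, fun i _ hi => absurd hi (by omega),
      Nat.one_lt_two_pow (by omega)⟩, ?_⟩
    have ha' : (a : ℝ) + 1 = 2 ^ (k + 1) := by exact_mod_cast ha1
    have hpow : (2 : ℝ) ^ (k + 1 + 1) = 2 * 2 ^ (k + 1) := pow_succ' 2 (k + 1)
    simp only [potential]
    push_cast
    rw [hreg, hpow]
    nlinarith

lemma improves_seller_end (h : Invariant T s b (.seller j δ slo shi blo bhi)) {slo' shi' : ℝ}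
    (hlo : slo ≤ slo') (hs : slo' ≤ s) (hs' : s ≤ shi') (hhi : shi' ≤ shi)
    (hw : shi' - slo' ≤ width j δ) :
    Improves T s b (.seller j δ slo shi blo bhi) (.buyer j δ slo' shi' blo bhi) := by
  have hreg := regret_le_sub (s := s) (b := b) (quote_le h)
  obtain ⟨hB, -⟩ := h
  have hB' : Bracket T s b j δ slo' shi' blo bhi :=
    { hB with
      slo_le := hs
      le_shi := hs'
      shi_le_blo := hhi.trans hB.shi_le_blo
      spread_le := by linarith [hB.spread_le] }
  refine ⟨⟨hB', hw⟩, ?_⟩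
  have := mul_nonneg (rate_nonneg (j := j) hB.delta_pos)
    (sub_nonneg.mpr (hB.slo_le.trans hB.le_shi))
  have h2T : (0 : ℝ) ≤ 2 / T := by positivity
  simp only [potential]
  linarith [hB.sub_le]

lemma improves_seller_hit (h : Invariant T s b (.seller j δ slo shi blo bhi))
    (hp : s ≤ max slo (shi - width j δ)) :
    Improves T s b (.seller j δ slo shi blo bhi) (step T (.seller j δ slo shi blo bhi) true) := by
  set w := width j δ
  set p := max slo (shi - w)
  have hw := width_pos (j := j) h.1.delta_pos
  by_cases hfin : p - slo ≤ w
  · have hstep : step T (.seller j δ slo shi blo bhi) true = .buyer j δ slo p blo bhi :=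
      if_pos hfin
    rw [hstep]
    exact improves_seller_end h le_rfl h.1.slo_le hp
      (max_le (h.1.slo_le.trans h.1.le_shi) (by linarith)) hfin
  have hstep : step T (.seller j δ slo shi blo bhi) true = .seller j δ slo p blo bhi :=
    if_neg hfin
  have hpw : p = shi - w := max_eq_right <| le_of_not_gt fun hlt =>
    hfin (by rw [show p = slo from max_eq_left hlt.le, sub_self]; exact hw.le)
  obtain ⟨hB, hslo⟩ := h
  rw [hstep]
  refine ⟨⟨{ hB with
      le_shi := hp
      shi_le_blo := by linarith [hB.shi_le_blo] }, by linarith⟩, ?_⟩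
  have hreg : regret s b (quote (.seller j δ slo shi blo bhi)) = (p - s) + (b - blo) :=
    regret_of_trade ⟨hp, hB.blo_le⟩
  have hdrop := rate_mul_width (j := j) hB.delta_pos
  have h2T : (0 : ℝ) ≤ 2 / T := by positivity
  simp only [potential]
  rw [hreg, hpw]
  linarith [hB.slo_le, hB.buyer_spread_le, hB.blo_le, hB.le_bhi]

lemma improves_seller_miss (h : Invariant T s b (.seller j δ slo shi blo bhi))
    (hp : ¬s ≤ max slo (shi - width j δ)) :
    Improves T s b (.seller j δ slo shi blo bhi) (step T (.seller j δ slo shi blo bhi) false) :=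
  improves_seller_end h (le_max_left _ _) (not_le.mp hp).le h.1.le_shi le_rfl
    (by linarith [le_max_right slo (shi - width j δ)])

lemma improves_buyer_end (hT : 0 < T) (h : Invariant T s b (.buyer j δ slo shi blo bhi))
    {blo' bhi' : ℝ}
    (hlo : blo ≤ blo') (hb : blo' ≤ b) (hb' : b ≤ bhi') (hhi : bhi' ≤ bhi)
    (hw : bhi' - blo' ≤ width j δ) :
    Improves T s b (.buyer j δ slo shi blo bhi) (endStage T j δ slo shi blo' bhi') := by
  have hreg := regret_le_sub (s := s) (b := b) (quote_le h)
  obtain ⟨hB, hslo⟩ := h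
  have h2T : (0 : ℝ) ≤ 2 / T := by positivity
  unfold endStage
  split_ifs with hexploit
  · refine ⟨⟨hB.le_shi, hB.shi_le_blo.trans hlo, hb, ?_⟩, ?_⟩
    · have : 2 / (T : ℝ) = 2 * (1 / T) := by ring
      linarith [hB.slo_le]
    · simp only [potential]
      linarith [hB.sub_le, hB.two_mul_le_buyerPotential]
  · have hj := add_one_le_stages hT hB.delta_le_one hexploit
    have hB' : Bracket T s b (j + 1) δ slo shi blo' bhi' :=
      { hB with
        stage_le := hj
        shi_le_blo := hB.shi_le_blo.trans hlo
        blo_le := hb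
        le_bhi := hb'
        spread_le := by linarith [hB.spread_le]
        buyer_spread_le := hw }
    have hinv : Invariant T s b (.seller (j + 1) δ slo shi blo' bhi') := ⟨hB', hslo⟩
    refine ⟨hinv, ?_⟩
    have hΦ' := potential_seller_le hinv
    push_cast at hΦ'
    change _ ≤ buyerPotential T j δ blo bhi - _ + _
    linarith [hB.sub_le, hB.buyerPotential_ge]

lemma improves_buyer_hit (hT : 0 < T) (h : Invariant T s b (.buyer j δ slo shi blo bhi))
    (hq : min bhi (blo + width j δ) ≤ b) :
    Improves T s b (.buyer j δ slo shi blo bhi) (step T (.buyer j δ slo shi blo bhi) true) := by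
  set w := width j δ
  set q := min bhi (blo + w)
  have hw := width_pos (j := j) h.1.delta_pos
  by_cases hfin : bhi - q ≤ w
  · have hstep : step T (.buyer j δ slo shi blo bhi) true = endStage T j δ slo shi q bhi :=
      if_pos hfin
    rw [hstep]
    exact improves_buyer_end hT h (le_min (h.1.blo_le.trans h.1.le_bhi) (by linarith)) hq
      h.1.le_bhi le_rfl hfin
  have hstep : step T (.buyer j δ slo shi blo bhi) true = .buyer j δ slo shi q bhi := if_neg hfin
  have hqw : q = blo + w := min_eq_right <| le_of_not_gt fun hlt =>
    hfin (by rw [show q = bhi from min_eq_left hlt.le, sub_self]; exact hw.le)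
  obtain ⟨hB, hslo⟩ := h
  rw [hstep]
  refine ⟨⟨{ hB with
      shi_le_blo := by linarith [hB.shi_le_blo]
      blo_le := hq
      buyer_spread_le := by linarith [hB.buyer_spread_le] }, hslo⟩, ?_⟩
  have hreg : regret s b (quote (.buyer j δ slo shi blo bhi)) = (shi - s) + (b - q) :=
    regret_of_trade ⟨hB.le_shi, hq⟩
  have hdrop := rate_mul_width (j := j) hB.delta_pos
  have h2T : (0 : ℝ) ≤ 2 / T := by positivity
  simp only [potential, buyerPotential]
  rw [hreg, hqw]
  linarith [hB.slo_le, hB.buyer_spread_le, hB.le_bhi]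

lemma improves_buyer_miss (hT : 0 < T) (h : Invariant T s b (.buyer j δ slo shi blo bhi))
    (hq : ¬min bhi (blo + width j δ) ≤ b) :
    Improves T s b (.buyer j δ slo shi blo bhi) (step T (.buyer j δ slo shi blo bhi) false) :=
  improves_buyer_end hT h le_rfl h.1.blo_le (not_le.mp hq).le (min_le_left _ _)
    (by linarith [min_le_right bhi (blo + width j δ)])

lemma improves_exploit (h : Invariant T s b (.exploit p q)) :
    Improves T s b (.exploit p q) (.exploit p q) := by
  refine ⟨h, ?_⟩
  rw [regret_of_trade ⟨h.1, h.2.2.1⟩]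
  show p - s + (b - q) ≤ 0 - 0 + 2 / T
  linarith [h.2.2.2]

lemma improves_step (hT : 0 < T) (hs : 0 ≤ s) (hsb : s ≤ b) (hb : b ≤ 1) {σ : State}
    (h : Invariant T s b σ) :
    Improves T s b σ (step T σ (decide (s ≤ (quote σ).1 ∧ (quote σ).2 ≤ b))) := by
  by_cases htrade : s ≤ (quote σ).1 ∧ (quote σ).2 ≤ b
  · rw [decide_eq_true htrade]
    cases σ with
    | dyadic k a => exact improves_dyadic_hit hs hb h htrade
    | seller j δ slo shi blo bhi => exact improves_seller_hit h htrade.1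
    | buyer j δ slo shi blo bhi => exact improves_buyer_hit hT h htrade.2
    | exploit p q => exact improves_exploit h
  · rw [decide_eq_false htrade]
    cases σ with
    | dyadic k a => exact improves_dyadic_miss hsb h htrade
    | seller j δ slo shi blo bhi =>
      exact improves_seller_miss h fun hp => htrade ⟨hp, h.1.blo_le⟩
    | buyer j δ slo shi blo bhi =>
      exact improves_buyer_miss hT h fun hq => htrade ⟨h.1.le_shi, hq⟩
    | exploit p q => exact improves_exploit h

lemma machine_post {σ : State} (h : Invariant T s b σ) : (machine T).post σ = quote σ :=
  Prod.ext (min_eq_left (quote_le h)) rfl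

theorem sum_regret_machine_le (hT : 0 < T) (hs : 0 ≤ s) (hsb : s ≤ b) (hb : b ≤ 1) :
    ∑ t ∈ range T, regret s b ((machine T).post ((machine T).run s b t)) ≤
      12 * (stages T + 1) + 7 := by
  have hinit : Invariant T s b (machine T).init :=
    ⟨fun _ _ hi => absurd hi (by omega), fun _ _ hi => absurd hi (by omega), by norm_num⟩
  have hstep : ∀ σ, Invariant T s b σ → Invariant T s b ((machine T).next s b σ) ∧
      regret s b ((machine T).post σ) ≤
        potential T s b σ - potential T s b ((machine T).next s b σ) + 2 / T := by
    intro σ h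
    simp only [PriceMachine.next, machine_post h]
    exact improves_step hT hs hsb hb h
  have hsum := PriceMachine.sum_regret_le hinit hstep (fun σ => potential_nonneg hs hsb hb) T
  have hε : (T : ℝ) * (2 / T) = 2 := by field_simp
  have hΦ : potential T s b (machine T).init ≤ 12 * (stages T + 1) + 5 := by
    show 12 * (stages T + 1) + 5 - (2 ^ (0 + 1) + ((1 : ℕ) : ℝ)) * (b - s) ≤ _
    norm_num
    linarith
  linarith

end Analysis

lemma natLog_natLog_le {T : ℕ} (hT : 2 ≤ T) :
    (Nat.log 2 (Nat.log 2 T) : ℝ) ≤ 2 * (1 + log (log T)) := by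
  set M := Nat.log 2 T
  have hM : 1 ≤ M := Nat.le_log_of_pow_le one_lt_two (by simpa using hT)
  have hlogT : 0 < log T := log_pos (by exact_mod_cast hT)
  have hlog2 : 1 / 2 < log 2 := by linarith [log_two_gt_d9]
  have hlog2' : log 2 < 1 := by linarith [log_two_lt_d9]
  have hMT : (M : ℝ) ≤ log T / log 2 := by simpa [logb] using natLog_le_logb T 2
  have hKM : (Nat.log 2 M : ℝ) ≤ log M / log 2 := by simpa [logb] using natLog_le_logb M 2
  have hloglog2 : -1 ≤ log (log 2) := by
    have := log_le_log (by norm_num) hlog2.le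
    rw [one_div, log_inv] at this
    linarith
  have hlogM : log M ≤ log (log T) + 1 :=
    calc log M ≤ log (log T / log 2) := log_le_log (by exact_mod_cast hM) hMT
      _ = log (log T) - log (log 2) := log_div hlogT.ne' (by linarith)
      _ ≤ log (log T) + 1 := by linarith
  have hK : (Nat.log 2 M : ℝ) ≤ (log (log T) + 1) / log 2 :=
    hKM.trans (div_le_div_of_nonneg_right hlogM (by linarith))
  have hK0 : (0 : ℝ) ≤ Nat.log 2 M := Nat.cast_nonneg _
  rw [le_div_iff₀ (by linarith)] at hK
  nlinarith

lemma stages_budget_le {T : ℕ} (hT : 4 ≤ T) :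
    12 * ((stages T : ℝ) + 1) + 7 ≤ 55 * (1 + log (log T)) := by
  have hK := natLog_natLog_le (T := T) (by omega)
  have hloglog : 0 ≤ log (log T) := by
    refine log_nonneg ((le_log_iff_exp_le (by positivity)).mpr ?_)
    have : (4 : ℝ) ≤ T := by exact_mod_cast hT
    linarith [exp_one_lt_d9]
  simp only [stages]
  push_cast
  linarith

end BilateralTrade

open BilateralTrade

/-- Context-free profit maximization with one-bit feedback: for every horizon `T ≥ 4`
there is a deterministic budget balanced algorithm (dyadic search followed by recursive
quadratic search) with profit regret `O(log log T)`, uniformly over `0 ≤ s ≤ b ≤ 1`. -/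
theorem exists_context_free_profit_algorithm :
    ∃ C : ℝ, 0 < C ∧
      ∀ T : ℕ, 4 ≤ T →
        ∃ Alg : AlgoCF2,
          (∀ h, (Alg h).1 ≤ (Alg h).2) ∧
          ∀ s b : ℝ, 0 ≤ s → s ≤ b → b ≤ 1 →
            ∑ _t ∈ Finset.range T, (b - s) -
              ∑ t ∈ Finset.range T,
                (if s ≤ (priceCF2 Alg s b t).1 ∧ (priceCF2 Alg s b t).2 ≤ b then
                  (priceCF2 Alg s b t).2 - (priceCF2 Alg s b t).1 else 0)
              ≤ C * (1 + Real.log (Real.log T)) := by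
  refine ⟨55, by norm_num, fun T hT => ⟨(machine T).toAlgo, fun _ => min_le_right _ _, ?_⟩⟩
  intro s b hs hsb hb
  have hregret : ∑ _t ∈ range T, (b - s) -
      ∑ t ∈ range T, profit s b (priceCF2 (machine T).toAlgo s b t) =
        ∑ t ∈ range T, regret s b ((machine T).post ((machine T).run s b t)) := by
    simp only [← sum_sub_distrib, PriceMachine.priceCF2_toAlgo, regret]
  exact hregret.trans_le <|
    (sum_regret_machine_le (by omega) hs hsb hb).trans (stages_budget_le hT)

end
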